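/- arXiv:1405.2447 — 4 statements merged into one kernel-verified Lean document; each statement's English description precedes it below -/
import Mathlib

section
/- Let A be a type, f : A → A a function, and t ∈ A an element with f(t) = t. Define the relation r on A by r(a, b) ⇔ b = f(a), and its symmetric closure r' by r'(a, b) ⇔ (b = f(a) ∨ a = f(b)). Then for every s ∈ A, the pair (s, t) lies in the reflexive transitive closure of r if and only if (s, t) lies in the reflexive transitive closure of r'. -/
open Relation

theorem reflTransGen_apply_of_isFixedPt {A : Type} {f : A → A} {t : A} (ht : f t = t) {b : A}
    (h : ReflTransGen (fun a b => b = f a) b t) : ReflTransGen (fun a b => b = f a) (f b) t := by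
  rcases h.cases_head with rfl | ⟨c, rfl, hct⟩
  · rw [ht]
  · exact hct

/-- For a function `f : A → A` and a fixed point `t` of `f`, `t` is reachable
from `s` under the relation `r a b ↔ b = f a` iff it is reachable under the
symmetric closure `r' a b ↔ (b = f a ∨ a = f b)`. -/
theorem stmt3 {A : Type} (f : A → A) (t : A) (ht : f t = t) (s : A) :
    Relation.ReflTransGen (fun a b => b = f a) s t ↔
      Relation.ReflTransGen (fun a b => b = f a ∨ a = f b) s t := by
  refine ⟨ReflTransGen.mono (fun _ _ => Or.inl) _ _, fun h => ?_⟩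
  induction h using ReflTransGen.head_induction_on with
  | refl => exact ReflTransGen.refl
  | head hab _ ih =>
    rcases hab with rfl | rfl
    · exact ReflTransGen.head rfl ih
    · exact reflTransGen_apply_of_isFixedPt ht ih
end

section
/- Let Σ be a finite alphabet with |Σ| ≥ 2, R ⊆ Σ × Σ a binary relation, n ≥ 1, and let G_n be the graph defined below, with k = n·(|Σ| − 1). Let s = s₁…s_n and t = t₁…t_n be H-words over H = (Σ, R) of length n, and let S_s = V(G_n) \ {v_i^{s_i} : 1 ≤ i ≤ n} and S_t = V(G_n) \ {v_i^{t_i} : 1 ≤ i ≤ n} be the corresponding vertex covers of G_n of size k. Then for every m ≥ 0: there exists a sequence s = w⁰, w¹, …, w^m = t of H-words of length n in which each w^j differs from w^{j−1} in at most one position, if and only if there exists a reconfiguration sequence S_s = T₀, T₁, …, T_{2m} = S_t of length 2m in which every T_j is a vertex cover of G_n with |T_j| ≤ k + 1. -/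
/-- The graph `G_n` on vertex set `Fin n × A`: the "column" `V_i = {i} × A` is a
clique for each `i`, and `(i, a)` is adjacent to `(i+1, b)` whenever `(a, b) ∉ R`. -/
def Gn {A : Type} (n : ℕ) (R : A → A → Prop) : SimpleGraph (Fin n × A) :=
  SimpleGraph.fromRel (fun p q => p.1 = q.1 ∨ (q.1.val = p.1.val + 1 ∧ ¬ R p.2 q.2))

/-- `w` is an `H`-word for `H = (A, R)`: consecutive symbols are in relation `R`. -/
def IsHWord {A : Type} {n : ℕ} (R : A → A → Prop) (w : Fin n → A) : Prop :=
  ∀ (i : Fin n) (h : i.val + 1 < n), R (w i) (w ⟨i.val + 1, h⟩)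

set_option linter.unusedSectionVars false

section Aux
variable {A : Type} [Fintype A] [DecidableEq A] {n : ℕ}

def colF (w : Fin n → A) : Finset (Fin n × A) :=
  Finset.image (fun i : Fin n => (i, w i)) Finset.univ

def covF (w : Fin n → A) : Finset (Fin n × A) := Finset.univ \ colF w

lemma mem_colF {w : Fin n → A} {p : Fin n × A} : p ∈ colF w ↔ p.2 = w p.1 := by
  simp only [colF, Finset.mem_image, Finset.mem_univ, true_and, Prod.ext_iff]
  constructor
  · rintro ⟨i, rfl, h⟩; exact h.symm
  · intro h; exact ⟨p.1, rfl, h.symm⟩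

lemma mem_covF {w : Fin n → A} {p : Fin n × A} : p ∈ covF w ↔ p.2 ≠ w p.1 := by
  simp [covF, mem_colF]

lemma gn_adj {R : A → A → Prop} {p q : Fin n × A} :
    (Gn n R).Adj p q ↔ p ≠ q ∧
      ((p.1 = q.1 ∨ (q.1.val = p.1.val + 1 ∧ ¬ R p.2 q.2)) ∨
       (q.1 = p.1 ∨ (p.1.val = q.1.val + 1 ∧ ¬ R q.2 p.2))) := by
  exact SimpleGraph.fromRel_adj _ p q

lemma covF_cover {R : A → A → Prop} {w : Fin n → A} (hw : IsHWord R w) :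
    ∀ ⦃p q : Fin n × A⦄, (Gn n R).Adj p q → p ∈ covF w ∨ q ∈ covF w := by
  intro p q hadj
  by_contra hc
  push_neg at hc
  obtain ⟨hp, hq⟩ := hc
  rw [mem_covF, not_not] at hp hq
  obtain ⟨hne, hrel⟩ := gn_adj.mp hadj
  rcases hrel with (h | h) | (h | h)
  · exact hne (Prod.ext h (hp.trans ((congrArg w h).trans hq.symm)))
  · obtain ⟨h1, h2⟩ := h
    have hlt : p.1.val + 1 < n := h1 ▸ q.1.isLt
    have hq1 : (⟨p.1.val + 1, hlt⟩ : Fin n) = q.1 := Fin.ext h1.symm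
    exact h2 (hp ▸ hq ▸ (hq1 ▸ hw p.1 hlt))
  · exact hne (Prod.ext h.symm (hp.trans ((congrArg w h.symm).trans hq.symm)))
  · obtain ⟨h1, h2⟩ := h
    have hlt : q.1.val + 1 < n := h1 ▸ p.1.isLt
    have hp1 : (⟨q.1.val + 1, hlt⟩ : Fin n) = p.1 := Fin.ext h1.symm
    exact h2 (hp ▸ hq ▸ (hp1 ▸ hw q.1 hlt))

lemma card_colF (w : Fin n → A) : (colF w).card = n := by
  rw [colF, Finset.card_image_of_injective _ (fun a b h => congrArg Prod.fst h)]
  simp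

lemma kk_eq (hA : 1 ≤ Fintype.card A) (n : ℕ) :
    n * (Fintype.card A - 1) + n = n * Fintype.card A := by
  conv_rhs => rw [← Nat.sub_add_cancel hA]
  rw [Nat.mul_succ]

lemma card_covF (hA : 1 ≤ Fintype.card A) (w : Fin n → A) :
    (covF w).card = n * (Fintype.card A - 1) := by
  rw [covF, Finset.card_sdiff_of_subset (Finset.subset_univ _), card_colF, Finset.card_univ]
  have := kk_eq (A := A) hA n
  simp only [Fintype.card_prod, Fintype.card_fin]
  omega

/-- Any vertex cover of `Gn` has at least `n(|A|-1)` vertices. -/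
lemma cover_card_ge (hA : 1 ≤ Fintype.card A) {R : A → A → Prop} {S : Finset (Fin n × A)}
    (hS : ∀ ⦃p q : Fin n × A⦄, (Gn n R).Adj p q → p ∈ S ∨ q ∈ S) :
    n * (Fintype.card A - 1) ≤ S.card := by
  classical
  set C := (Finset.univ : Finset (Fin n × A)) \ S with hC
  have hfib : ∀ i : Fin n, (C.filter (fun p => p.1 = i)).card ≤ 1 := by
    intro i
    apply Finset.card_le_one.mpr
    intro a ha b hb
    simp only [Finset.mem_filter] at ha hb
    by_contra hab
    have hadj : (Gn n R).Adj a b :=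
      gn_adj.mpr ⟨hab, Or.inl (Or.inl (ha.2.trans hb.2.symm))⟩
    rcases hS hadj with h | h
    · exact (Finset.mem_sdiff.mp ha.1).2 h
    · exact (Finset.mem_sdiff.mp hb.1).2 h
  have hsum : C.card = ∑ i : Fin n, (C.filter (fun p => p.1 = i)).card :=
    Finset.card_eq_sum_card_fiberwise (fun x _ => Finset.mem_univ _)
  have hCn : C.card ≤ n := by
    rw [hsum]
    calc ∑ i : Fin n, (C.filter (fun p => p.1 = i)).card
        ≤ (Finset.univ : Finset (Fin n)).card • 1 :=
          Finset.sum_le_card_nsmul _ _ 1 (fun i _ => hfib i)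
      _ = n := by simp
  have hCS : C.card = n * Fintype.card A - S.card := by
    rw [hC, Finset.card_sdiff_of_subset (Finset.subset_univ _), Finset.card_univ]
    simp [Fintype.card_prod]
  have hSle : S.card ≤ n * Fintype.card A := by
    have := Finset.card_le_univ S
    simpa [Fintype.card_prod] using this
  have hk : n * (Fintype.card A - 1) + n = n * Fintype.card A :=
    kk_eq hA n
  omega

/-- A vertex cover of size exactly `n(|A|-1)` misses exactly one vertex per column. -/
lemma fiber_unique (hA : 1 ≤ Fintype.card A) {R : A → A → Prop} {S : Finset (Fin n × A)}
    (hS : ∀ ⦃p q : Fin n × A⦄, (Gn n R).Adj p q → p ∈ S ∨ q ∈ S)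
    (hcard : S.card = n * (Fintype.card A - 1)) :
    ∀ i : Fin n, ∃! a : A, (i, a) ∈ (Finset.univ : Finset (Fin n × A)) \ S := by
  classical
  intro i
  set C := (Finset.univ : Finset (Fin n × A)) \ S with hC
  have hfib : ∀ i : Fin n, (C.filter (fun p => p.1 = i)).card ≤ 1 := by
    intro i
    apply Finset.card_le_one.mpr
    intro a ha b hb
    simp only [Finset.mem_filter] at ha hb
    by_contra hab
    have hadj : (Gn n R).Adj a b :=
      gn_adj.mpr ⟨hab, Or.inl (Or.inl (ha.2.trans hb.2.symm))⟩
    rcases hS hadj with h | h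
    · exact (Finset.mem_sdiff.mp ha.1).2 h
    · exact (Finset.mem_sdiff.mp hb.1).2 h
  have hsum : C.card = ∑ i : Fin n, (C.filter (fun p => p.1 = i)).card :=
    Finset.card_eq_sum_card_fiberwise (fun x _ => Finset.mem_univ _)
  have hCS : C.card = n := by
    rw [hC, Finset.card_sdiff_of_subset (Finset.subset_univ _), Finset.card_univ, hcard]
    have hk : n * (Fintype.card A - 1) + n = n * Fintype.card A :=
      kk_eq hA n
    simp only [Fintype.card_prod, Fintype.card_fin]
    omega
  have hone : (C.filter (fun p => p.1 = i)).card = 1 := by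
    by_contra hne
    have h0 : (C.filter (fun p => p.1 = i)).card = 0 := by
      have := hfib i; omega
    have : C.card ≤ (n - 1) * 1 := by
      rw [hsum, ← Finset.sum_erase _ (by simpa using h0)]
      calc ∑ x ∈ Finset.univ.erase i, (C.filter (fun p => p.1 = x)).card
          ≤ (Finset.univ.erase i).card • 1 :=
            Finset.sum_le_card_nsmul _ _ 1 (fun x _ => hfib x)
        _ = (n - 1) * 1 := by
            rw [Finset.card_erase_of_mem (Finset.mem_univ i)]; simp
    have hn1 : 1 ≤ n := Fin.pos i
    omega
  obtain ⟨z, hz⟩ := Finset.card_eq_one.mp hone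
  have hz1 : z.1 = i := by
    have : z ∈ C.filter (fun p => p.1 = i) := hz ▸ Finset.mem_singleton_self z
    exact (Finset.mem_filter.mp this).2
  refine ⟨z.2, ?_, ?_⟩
  · have hzC : z ∈ C := by
      have : z ∈ C.filter (fun p => p.1 = i) := hz ▸ Finset.mem_singleton_self z
      exact (Finset.mem_filter.mp this).1
    have hez : (i, z.2) = z := Prod.ext hz1.symm rfl
    exact hez ▸ hzC
  · intro b hb
    have : (i, b) ∈ C.filter (fun p => p.1 = i) := Finset.mem_filter.mpr ⟨hb, rfl⟩
    rw [hz] at this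
    have := Finset.mem_singleton.mp this
    rw [← this]

lemma symmDiff_insert' {S : Finset (Fin n × A)} {x : Fin n × A} (hx : x ∉ S) :
    symmDiff S (insert x S) = {x} := by
  ext p
  simp only [Finset.mem_symmDiff, Finset.mem_insert, Finset.mem_singleton]
  by_cases hpx : p = x
  · subst hpx; tauto
  · tauto

lemma symmdiff_one {S S' : Finset (Fin n × A)} (h : (symmDiff S S').card = 1) :
    ∃ z, (z ∉ S ∧ S' = insert z S) ∨ (z ∈ S ∧ S' = S.erase z) := by
  obtain ⟨z, hz⟩ := Finset.card_eq_one.mp h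
  have hmem : ∀ p, (p ∈ S ∧ p ∉ S' ∨ p ∈ S' ∧ p ∉ S) ↔ p = z := by
    intro p
    rw [← Finset.mem_symmDiff, hz, Finset.mem_singleton]
  by_cases hzS : z ∈ S
  · refine ⟨z, Or.inr ⟨hzS, ?_⟩⟩
    ext p
    rw [Finset.mem_erase]
    by_cases hpz : p = z
    · subst hpz
      have := (hmem p).mpr rfl
      tauto
    · have := (hmem p).not
      simp only [hpz] at this
      tauto
  · refine ⟨z, Or.inl ⟨hzS, ?_⟩⟩
    ext p
    rw [Finset.mem_insert]
    by_cases hpz : p = z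
    · subst hpz
      have := (hmem p).mpr rfl
      tauto
    · have := (hmem p).not
      simp only [hpz] at this
      tauto

end Aux

/-- For `H`-words `s, t` of length `n` with corresponding vertex covers
`S_s, S_t` of `G_n` of size `k = n(|Σ|−1)`: there is a sequence of `m + 1`
`H`-words from `s` to `t`, consecutive ones differing in at most one position,
iff there is a reconfiguration sequence of length `2m` from `S_s` to `S_t`
consisting of vertex covers of `G_n` of size at most `k + 1`. -/
theorem stmt10 {A : Type} [Fintype A] [DecidableEq A] (hA : 2 ≤ Fintype.card A)
    (R : A → A → Prop) (n : ℕ) (hn : 1 ≤ n)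
    (s t : Fin n → A) (hs : IsHWord R s) (ht : IsHWord R t) (m : ℕ) :
    (∃ w : ℕ → (Fin n → A), w 0 = s ∧ w m = t ∧
        (∀ j ≤ m, IsHWord R (w j)) ∧
        (∀ j < m, ∀ i i' : Fin n,
          w j i ≠ w (j + 1) i → w j i' ≠ w (j + 1) i' → i = i')) ↔
    (∃ T : ℕ → Finset (Fin n × A),
        T 0 = Finset.univ \ Finset.image (fun i : Fin n => (i, s i)) Finset.univ ∧
        T (2 * m) = Finset.univ \ Finset.image (fun i : Fin n => (i, t i)) Finset.univ ∧
        (∀ j < 2 * m, (symmDiff (T j) (T (j + 1))).card = 1) ∧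
        (∀ j ≤ 2 * m, (∀ ⦃p q⦄, (Gn n R).Adj p q → p ∈ T j ∨ q ∈ T j) ∧
          (T j).card ≤ n * (Fintype.card A - 1) + 1)) := by
  classical
  have hA1 : 1 ≤ Fintype.card A := by omega
  constructor
  · rintro ⟨w, hw0, hwm, hwH, hwd⟩
    let pos : ℕ → Fin n := fun j =>
      if h : ∃ i, w j i ≠ w (j + 1) i then h.choose else ⟨0, hn⟩
    have hpos : ∀ j < m, ∀ i, i ≠ pos j → w j i = w (j + 1) i := by
      intro j hj i hi
      by_contra hne
      have hex : ∃ i, w j i ≠ w (j + 1) i := ⟨i, hne⟩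
      apply hi
      have h1 : i = hex.choose := hwd j hj i hex.choose hne hex.choose_spec
      simp only [pos, dif_pos hex]
      exact h1
    set x : ℕ → Fin n × A := fun l => (pos l, w l (pos l)) with hx
    let T : ℕ → Finset (Fin n × A) := fun r =>
      if m ≤ r / 2 then covF (w m)
      else if r % 2 = 0 then covF (w (r / 2))
      else insert (x (r / 2)) (covF (w (r / 2)))
    have hTeven : ∀ l ≤ m, T (2 * l) = covF (w l) := by
      intro l hl
      simp only [T, Nat.mul_div_cancel_left l (by norm_num : 0 < 2),
        Nat.mul_mod_right]
      by_cases h : m ≤ l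
      · rw [if_pos h]
        have : l = m := le_antisymm hl h
        rw [this]
      · rw [if_neg h]; simp
    have hTodd : ∀ l < m, T (2 * l + 1) = insert (x l) (covF (w l)) := by
      intro l hl
      have h2 : (2 * l + 1) / 2 = l := by omega
      have h3 : (2 * l + 1) % 2 = 1 := by omega
      simp only [T, h2, h3]
      rw [if_neg (by omega), if_neg (by omega)]
    have hxnot : ∀ l, x l ∉ covF (w l) := by
      intro l h
      rw [mem_covF] at h
      exact h rfl
    refine ⟨T, ?_, ?_, ?_, ?_⟩
    · have := hTeven 0 (Nat.zero_le m)
      rw [mul_zero] at this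
      rw [this, hw0]; rfl
    · rw [hTeven m le_rfl, hwm]; rfl
    · intro j hj
      obtain ⟨l, hl⟩ : ∃ l, j = 2 * l ∨ j = 2 * l + 1 := ⟨j / 2, by omega⟩
      rcases hl with rfl | rfl
      · have hlm : l < m := by omega
        rw [hTeven l hlm.le, show 2 * l + 1 = 2 * l + 1 from rfl, hTodd l hlm,
          symmDiff_insert' (hxnot l)]
        simp
      · have hlm : l < m := by omega
        have h22 : 2 * l + 1 + 1 = 2 * (l + 1) := by ring
        rw [hTodd l hlm, h22, hTeven (l + 1) (by omega)]
        -- insert (x l) (covF (w l)) = insert (y) (covF (w (l+1)))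
        set y : Fin n × A := (pos l, w (l + 1) (pos l)) with hy
        have key : insert (x l) (covF (w l)) = insert y (covF (w (l + 1))) := by
          ext p
          simp only [Finset.mem_insert, mem_covF, hx, hy]
          by_cases hp1 : p.1 = pos l
          · constructor
            · intro h
              by_cases hpv : p.2 = w (l + 1) (pos l)
              · exact Or.inl (Prod.ext hp1 hpv)
              · exact Or.inr (fun hc => hpv (by rw [← hp1]; exact hc))
            · intro h
              by_cases hpv : p.2 = w l (pos l)
              · exact Or.inl (Prod.ext hp1 hpv)
              · exact Or.inr (fun hc => hpv (by rw [← hp1]; exact hc))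
          · have hsame : w l p.1 = w (l + 1) p.1 := hpos l hlm p.1 hp1
            constructor
            · rintro (h | h)
              · exact absurd (congrArg Prod.fst h) hp1
              · exact Or.inr (fun hc => h (hsame ▸ hc))
            · rintro (h | h)
              · exact absurd (congrArg Prod.fst h) hp1
              · exact Or.inr (fun hc => h (hsame ▸ hc))
        have hynot : y ∉ covF (w (l + 1)) := by
          intro h; rw [mem_covF] at h; exact h rfl
        rw [key, symmDiff_comm, symmDiff_insert' hynot]
        simp
    · intro j hj
      obtain ⟨l, hl⟩ : ∃ l, j = 2 * l ∨ j = 2 * l + 1 := ⟨j / 2, by omega⟩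
      rcases hl with rfl | rfl
      · have hlm : l ≤ m := by omega
        rw [hTeven l hlm]
        exact ⟨covF_cover (hwH l hlm), by rw [card_covF hA1]; omega⟩
      · have hlm : l < m := by omega
        rw [hTodd l hlm]
        constructor
        · intro p q hadj
          rcases covF_cover (hwH l hlm.le) hadj with h | h
          · exact Or.inl (Finset.mem_insert_of_mem h)
          · exact Or.inr (Finset.mem_insert_of_mem h)
        · calc (insert (x l) (covF (w l))).card ≤ (covF (w l)).card + 1 :=
                Finset.card_insert_le _ _
            _ = n * (Fintype.card A - 1) + 1 := by rw [card_covF hA1]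
  · rintro ⟨T, hT0, hTm, hTd, hTc⟩
    set k := n * (Fintype.card A - 1) with hk
    have hcard0 : (T 0).card = k := by
      rw [hT0]; exact card_covF hA1 s
    have hge : ∀ j ≤ 2 * m, k ≤ (T j).card := fun j hj =>
      cover_card_ge hA1 (hTc j hj).1
    have hle : ∀ j ≤ 2 * m, (T j).card ≤ k + 1 := fun j hj => (hTc j hj).2
    have hstep : ∀ j < 2 * m,
        (T (j + 1)).card = (T j).card + 1 ∨ (T j).card = (T (j + 1)).card + 1 := by
      intro j hj
      obtain ⟨z, hz⟩ := symmdiff_one (hTd j hj)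
      rcases hz with ⟨hzn, hins⟩ | ⟨hzm, hers⟩
      · left; rw [hins, Finset.card_insert_of_notMem hzn]
      · right
        rw [hers, Finset.card_erase_of_mem hzm]
        have : 1 ≤ (T j).card := Finset.card_pos.mpr ⟨z, hzm⟩
        omega
    have hpar : ∀ j ≤ 2 * m, (T j).card = k + j % 2 := by
      intro j
      induction j with
      | zero => intro _; simpa using hcard0
      | succ j ih =>
        intro hj
        have h1 := ih (by omega)
        have h2 := hstep j (by omega)
        have h3 := hge (j + 1) hj
        have h4 := hle (j + 1) hj
        omega
    have hfib : ∀ l ≤ m, ∀ i : Fin n,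
        ∃! a : A, (i, a) ∈ (Finset.univ : Finset (Fin n × A)) \ T (2 * l) := by
      intro l hl
      refine fiber_unique hA1 (hTc (2 * l) (by omega)).1 ?_
      have := hpar (2 * l) (by omega)
      simpa [Nat.mul_mod_right] using this
    let W : ℕ → Fin n → A := fun l i =>
      if h : l ≤ m then (hfib l h i).exists.choose else t i
    have hW : ∀ l (h : l ≤ m) (i : Fin n),
        (i, W l i) ∈ (Finset.univ : Finset (Fin n × A)) \ T (2 * l) ∧
        ∀ b : A, (i, b) ∈ (Finset.univ : Finset (Fin n × A)) \ T (2 * l) → b = W l i := by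
      intro l h i
      have hWd : W l i = (hfib l h i).exists.choose := by
        simp only [W, dif_pos h]
      rw [hWd]
      refine ⟨(hfib l h i).exists.choose_spec, ?_⟩
      intro b hb
      obtain ⟨a, ha, hu⟩ := hfib l h i
      rw [hu b hb, hu (hfib l h i).exists.choose (hfib l h i).exists.choose_spec]
    refine ⟨W, ?_, ?_, ?_, ?_⟩
    · funext i
      refine ((hW 0 (Nat.zero_le m) i).2 (s i) ?_).symm
      rw [show (2 : ℕ) * 0 = 0 by ring, hT0]
      simp [mem_colF]
    · funext i
      refine ((hW m le_rfl i).2 (t i) ?_).symm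
      rw [hTm]
      simp [mem_colF]
    · intro l hl i hilt
      by_contra hR
      have hp : ((i, W l i) : Fin n × A) ∉ T (2 * l) :=
        (Finset.mem_sdiff.mp (hW l hl i).1).2
      have hq : ((⟨i.val + 1, hilt⟩, W l ⟨i.val + 1, hilt⟩) : Fin n × A) ∉ T (2 * l) :=
        (Finset.mem_sdiff.mp (hW l hl ⟨i.val + 1, hilt⟩).1).2
      have hadj : (Gn n R).Adj (i, W l i) (⟨i.val + 1, hilt⟩, W l ⟨i.val + 1, hilt⟩) := by
        rw [gn_adj]
        refine ⟨?_, Or.inl (Or.inr ⟨rfl, hR⟩)⟩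
        intro hc
        have h2 := congrArg Fin.val (congrArg Prod.fst hc)
        simp only [Fin.val_mk] at h2
        omega
      rcases (hTc (2 * l) (by omega)).1 hadj with h | h
      · exact hp h
      · exact hq h
    · intro l hl i i' hi hi'
      -- structure of the two moves
      obtain ⟨z1, hz1⟩ := symmdiff_one (hTd (2 * l) (by omega))
      have hc1 : (T (2 * l)).card = k := by
        simpa [Nat.mul_mod_right] using hpar (2 * l) (by omega)
      have hc2 : (T (2 * l + 1)).card = k + 1 := by
        have h := hpar (2 * l + 1) (by omega)
        have h' : (2 * l + 1) % 2 = 1 := by omega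
        rw [h'] at h; exact h
      have hc3 : (T (2 * l + 2)).card = k := by
        have h := hpar (2 * l + 2) (by omega)
        have h' : (2 * l + 2) % 2 = 0 := by omega
        rw [h'] at h; simpa using h
      have hx1 : z1 ∉ T (2 * l) ∧ T (2 * l + 1) = insert z1 (T (2 * l)) := by
        rcases hz1 with h | ⟨hzm, hers⟩
        · exact h
        · exfalso
          rw [hers, Finset.card_erase_of_mem hzm] at hc2
          omega
      obtain ⟨z2, hz2⟩ := symmdiff_one (hTd (2 * l + 1) (by omega))
      have hx2 : z2 ∈ T (2 * l + 1) ∧ T (2 * l + 2) = (T (2 * l + 1)).erase z2 := by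
        rcases hz2 with ⟨hzn, hins⟩ | h
        · exfalso
          rw [hins, Finset.card_insert_of_notMem hzn] at hc3
          omega
        · exact h
      -- any position other than z1.1 is unchanged
      have hkey : ∀ i'' : Fin n, i'' ≠ z1.1 → W l i'' = W (l + 1) i'' := by
        intro i'' hne
        have hmem : ((i'', W l i'') : Fin n × A) ∈
            (Finset.univ : Finset (Fin n × A)) \ T (2 * l) := (hW l hl.le i'').1
        have hnotT : ((i'', W l i'') : Fin n × A) ∉ T (2 * l) :=
          (Finset.mem_sdiff.mp hmem).2
        have hnotT2 : ((i'', W l i'') : Fin n × A) ∉ T (2 * (l + 1)) := by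
          rw [show 2 * (l + 1) = 2 * l + 2 by ring, hx2.2, hx1.2]
          intro hc
          rcases Finset.mem_insert.mp (Finset.mem_erase.mp hc).2 with h | h
          · exact hne (congrArg Prod.fst h)
          · exact hnotT h
        exact (hW (l + 1) (by omega) i'').2 (W l i'')
          (Finset.mem_sdiff.mpr ⟨Finset.mem_univ _, hnotT2⟩)
      have h1 : i = z1.1 := by
        by_contra hc
        exact hi (hkey i hc)
      have h2 : i' = z1.1 := by
        by_contra hc
        exact hi' (hkey i' hc)
      rw [h1, h2]
end

section
/- Let Π be a hereditary graph property. If a signature τ over a set X ⊆ V(G) is obtained from a signature τ' over a set X' with X ⊆ X' ⊆ V(G) that is valid with respect to Π by replacing every vertex step of τ' lying in X' \ X by a used or unused step (and leaving all other steps unchanged), then τ is valid with respect to Π. -/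
/-- A step of a signature: a vertex step, a `used` step, or an `unused` step. -/
inductive Step (V : Type) : Type
  | vert : V → Step V
  | used : Step V
  | unused : Step V

/-- `applySteps σ τ S i` is `τ(i, S)`: the set obtained from `S` by executing
the first `i` steps of the signature `τ`, where the `j`-th step adds `τ[j]` if
it is a vertex step and `σ[j] = +1` (`true`), removes it if `σ[j] = −1`
(`false`), and does nothing otherwise. -/
def applySteps {V : Type} [DecidableEq V] {ℓ : ℕ} (σ : Fin ℓ → Bool)
    (τ : Fin ℓ → Step V) (S : Finset V) : ℕ → Finset V
  | 0 => S
  | (i + 1) =>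
    if h : i < ℓ then
      match τ ⟨i, h⟩ with
      | Step.vert v =>
          if σ ⟨i, h⟩ then insert v (applySteps σ τ S i)
          else (applySteps σ τ S i).erase v
      | _ => applySteps σ τ S i
    else applySteps σ τ S i

/-- `τ` is a signature over `X`: every step lies in `X ∪ {used, unused}`. -/
def IsSigOver {V : Type} {ℓ : ℕ} (X : Finset V) (τ : Fin ℓ → Step V) : Prop :=
  ∀ (i : Fin ℓ) (v : V), τ i = Step.vert v → v ∈ X

/-- Validity of a signature `τ` over `X` with respect to a graph property `Π`:
(1) a removed vertex is present; (2) an added vertex is absent; (3) the final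
set is `S_t ∩ X`; (4) `G[X \ τ(i, S_s ∩ X)]` has property `Π` for all `i ≤ ℓ`. -/
def ValidSig {V : Type} [DecidableEq V] {ℓ : ℕ} (G : SimpleGraph V)
    (Pi : ∀ ⦃W : Type⦄, SimpleGraph W → Prop)
    (Ss St : Finset V) (σ : Fin ℓ → Bool) (X : Finset V) (τ : Fin ℓ → Step V) :
    Prop :=
  (∀ (i : Fin ℓ) (v : V), τ i = Step.vert v → σ i = false →
      v ∈ applySteps σ τ (Ss ∩ X) i.val) ∧
  (∀ (i : Fin ℓ) (v : V), τ i = Step.vert v → σ i = true →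
      v ∉ applySteps σ τ (Ss ∩ X) i.val) ∧
  applySteps σ τ (Ss ∩ X) ℓ = St ∩ X ∧
  (∀ i ≤ ℓ, Pi (G.induce ((X \ applySteps σ τ (Ss ∩ X) i : Finset V) : Set V)))

lemma induce_induce_iso {V : Type} (G : SimpleGraph V) (T U : Set V) (hUT : U ⊆ T) :
    Nonempty ((G.induce T).induce {x : T | (x : V) ∈ U} ≃g G.induce U) := by
  refine ⟨⟨⟨fun x => ⟨(x : V), x.2⟩, fun x => ⟨⟨(x : V), hUT x.2⟩, x.2⟩, ?_, ?_⟩, ?_⟩⟩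
  · intro x; rfl
  · intro x; rfl
  · intro a b; rfl

lemma sig_inter_insert {V : Type} [DecidableEq V] {A X : Finset V} {v : V} (hv : v ∈ X) :
    insert v A ∩ X = insert v (A ∩ X) := by
  ext x
  simp only [Finset.mem_inter, Finset.mem_insert]
  constructor
  · rintro ⟨rfl | h, hx⟩
    · exact Or.inl rfl
    · exact Or.inr ⟨h, hx⟩
  · rintro (rfl | ⟨h, hx⟩)
    · exact ⟨Or.inl rfl, hv⟩
    · exact ⟨Or.inr h, hx⟩

lemma sig_inter_erase {V : Type} [DecidableEq V] (A X : Finset V) (v : V) :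
    A.erase v ∩ X = (A ∩ X).erase v := by
  ext x
  simp only [Finset.mem_inter, Finset.mem_erase]
  tauto

lemma sig_inter_insert_not {V : Type} [DecidableEq V] {A X : Finset V} {v : V} (hv : v ∉ X) :
    insert v A ∩ X = A ∩ X := by
  ext x
  simp only [Finset.mem_inter, Finset.mem_insert]
  constructor
  · rintro ⟨rfl | h, hx⟩
    · exact absurd hx hv
    · exact ⟨h, hx⟩
  · rintro ⟨h, hx⟩
    exact ⟨Or.inr h, hx⟩

lemma sig_inter_erase_not {V : Type} [DecidableEq V] {A X : Finset V} {v : V} (hv : v ∉ X) :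
    A.erase v ∩ X = A ∩ X := by
  ext x
  simp only [Finset.mem_inter, Finset.mem_erase]
  constructor
  · rintro ⟨⟨_, h⟩, hx⟩
    exact ⟨h, hx⟩
  · rintro ⟨h, hx⟩
    exact ⟨⟨fun hxv => hv (hxv ▸ hx), h⟩, hx⟩

/-- If `Π` is a hereditary graph property and the signature `τ` over `X ⊆ X'`
is obtained from a signature `τ'` over `X'` that is valid with respect to `Π`
by replacing every vertex step lying in `X' \ X` by a `used` or `unused` step
(leaving all other steps unchanged), then `τ` is valid with respect to `Π`. -/
theorem stmt13 {V : Type} [Fintype V] [DecidableEq V] (G : SimpleGraph V)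
    (Pi : ∀ ⦃W : Type⦄, SimpleGraph W → Prop)
    (hHered : ∀ {W : Type} (H : SimpleGraph W) (s : Set W), Pi H → Pi (H.induce s))
    (hIso : ∀ {W W' : Type} (H : SimpleGraph W) (H' : SimpleGraph W'),
      Nonempty (H ≃g H') → Pi H → Pi H')
    (Ss St : Finset V) (ℓ : ℕ) (hℓ : 1 ≤ ℓ) (σ : Fin ℓ → Bool)
    (X X' : Finset V) (hXX' : X ⊆ X')
    (τ τ' : Fin ℓ → Step V)
    (hτ' : IsSigOver X' τ')
    (hrepl : ∀ i : Fin ℓ,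
      (τ' i = Step.used → τ i = Step.used) ∧
      (τ' i = Step.unused → τ i = Step.unused) ∧
      (∀ v : V, τ' i = Step.vert v →
        (v ∈ X → τ i = Step.vert v) ∧
        (v ∉ X → τ i = Step.used ∨ τ i = Step.unused)))
    (hvalid : ValidSig G Pi Ss St σ X' τ') :
    ValidSig G Pi Ss St σ X τ := by
  classical
  have key : ∀ i : ℕ,
      applySteps σ τ (Ss ∩ X) i = applySteps σ τ' (Ss ∩ X') i ∩ X := by
    intro i
    induction i with
    | zero =>
        show Ss ∩ X = (Ss ∩ X') ∩ X
        rw [Finset.inter_assoc, Finset.inter_comm X' X, ← Finset.inter_assoc,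
          Finset.inter_assoc, Finset.inter_eq_left.mpr hXX']
    | succ i ih =>
        by_cases h : i < ℓ
        · show (if h : i < ℓ then
              match τ ⟨i, h⟩ with
              | Step.vert v =>
                  if σ ⟨i, h⟩ then insert v (applySteps σ τ (Ss ∩ X) i)
                  else (applySteps σ τ (Ss ∩ X) i).erase v
              | _ => applySteps σ τ (Ss ∩ X) i
            else applySteps σ τ (Ss ∩ X) i)
            = (if h : i < ℓ then
              match τ' ⟨i, h⟩ with
              | Step.vert v =>
                  if σ ⟨i, h⟩ then insert v (applySteps σ τ' (Ss ∩ X') i)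
                  else (applySteps σ τ' (Ss ∩ X') i).erase v
              | _ => applySteps σ τ' (Ss ∩ X') i
            else applySteps σ τ' (Ss ∩ X') i) ∩ X
          rw [dif_pos h, dif_pos h]
          obtain ⟨hu, hn, hv⟩ := hrepl ⟨i, h⟩
          cases hτ'i : τ' ⟨i, h⟩ with
          | vert v =>
              by_cases hvX : v ∈ X
              · rw [(hv v hτ'i).1 hvX]
                dsimp only
                by_cases hσ : σ ⟨i, h⟩ = true
                · rw [if_pos hσ, if_pos hσ, ih, sig_inter_insert hvX]
                · rw [if_neg hσ, if_neg hσ, ih, sig_inter_erase]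
              · have hrw : (match τ ⟨i, h⟩ with
                    | Step.vert v =>
                        if σ ⟨i, h⟩ then insert v (applySteps σ τ (Ss ∩ X) i)
                        else (applySteps σ τ (Ss ∩ X) i).erase v
                    | _ => applySteps σ τ (Ss ∩ X) i)
                    = applySteps σ τ (Ss ∩ X) i := by
                  rcases (hv v hτ'i).2 hvX with hτi | hτi <;> rw [hτi]
                rw [hrw, ih]
                dsimp only
                by_cases hσ : σ ⟨i, h⟩ = true
                · rw [if_pos hσ, sig_inter_insert_not hvX]
                · rw [if_neg hσ, sig_inter_erase_not hvX]
          | used => rw [hu hτ'i]; exact ih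
          | unused => rw [hn hτ'i]; exact ih
        · show (if h : i < ℓ then _ else applySteps σ τ (Ss ∩ X) i)
            = (if h : i < ℓ then _ else applySteps σ τ' (Ss ∩ X') i) ∩ X
          rw [dif_neg h, dif_neg h, ih]
  obtain ⟨hv1, hv2, hv3, hv4⟩ := hvalid
  have hback : ∀ (i : Fin ℓ) (v : V), τ i = Step.vert v → τ' i = Step.vert v ∧ v ∈ X := by
    intro i v hiv
    obtain ⟨hu, hn, hvv⟩ := hrepl i
    cases hτ'i : τ' i with
    | vert w =>
        by_cases hwX : w ∈ X
        · have heq : Step.vert w = Step.vert v := by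
            rw [← (hvv w hτ'i).1 hwX, hiv]
          obtain rfl : w = v := Step.vert.inj heq
          exact ⟨rfl, hwX⟩
        · rcases (hvv w hτ'i).2 hwX with h | h <;> rw [h] at hiv <;> cases hiv
    | used => rw [hu hτ'i] at hiv; cases hiv
    | unused => rw [hn hτ'i] at hiv; cases hiv
  refine ⟨?_, ?_, ?_, ?_⟩
  · intro i v hiv hσ
    obtain ⟨hτ'i, hvX⟩ := hback i v hiv
    rw [key i.val]
    exact Finset.mem_inter.mpr ⟨hv1 i v hτ'i hσ, hvX⟩
  · intro i v hiv hσ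
    obtain ⟨hτ'i, hvX⟩ := hback i v hiv
    rw [key i.val]
    intro hmem
    exact hv2 i v hτ'i hσ (Finset.mem_inter.mp hmem).1
  · rw [key ℓ, hv3, Finset.inter_assoc, Finset.inter_comm X' X, ← Finset.inter_assoc,
      Finset.inter_assoc, Finset.inter_eq_left.mpr hXX']
  · intro i hi
    rw [key i]
    set A := applySteps σ τ' (Ss ∩ X') i with hA
    have hsub : ((X \ (A ∩ X) : Finset V) : Set V) ⊆ ((X' \ A : Finset V) : Set V) := by
      intro x hx
      simp only [Finset.coe_sdiff, Set.mem_diff, Finset.mem_coe, Finset.mem_inter] at hx ⊢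
      exact ⟨hXX' hx.1, fun ha => hx.2 ⟨ha, hx.1⟩⟩
    have hPi := hv4 i hi
    have hPi2 := hHered (G.induce ((X' \ A : Finset V) : Set V))
      {x | (x : V) ∈ ((X \ (A ∩ X) : Finset V) : Set V)} hPi
    exact hIso _ _ (induce_induce_iso G _ _ hsub) hPi2
end

section
/- Let Π be the property of having no edges (so condition (4) of validity says that τ(i, S_s ∩ X) is a vertex cover of the induced subgraph G[X] for all 0 ≤ i ≤ ℓ). Let τ, τ₁, τ₂ be signatures over X, X₁, X₂ respectively, where X = X₁ ∪ X₂ and every edge of G[X] is contained in G[X₁] or in G[X₂]. Assume that for all 1 ≤ i ≤ ℓ: τ[i] = τ₁[i] whenever τ[i] ∈ X₁ or τ₁[i] ∈ X₁, and τ[i] = τ₂[i] whenever τ[i] ∈ X₂ or τ₂[i] ∈ X₂. If τ₁ and τ₂ are valid with respect to Π, then so is τ. -/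
/-- Validity of a signature `τ` over `X` for `Π` = "having no edges":
(1) a removed vertex is present; (2) an added vertex is absent; (3) the final
set is `S_t ∩ X`; (4) `τ(i, S_s ∩ X)` is a vertex cover of `G[X]` (equivalently,
`G[X \ τ(i, S_s ∩ X)]` has no edges) for all `0 ≤ i ≤ ℓ`. -/
def ValidVC {V : Type} [DecidableEq V] {ℓ : ℕ} (G : SimpleGraph V)
    (Ss St : Finset V) (σ : Fin ℓ → Bool) (X : Finset V) (τ : Fin ℓ → Step V) :
    Prop :=
  (∀ (i : Fin ℓ) (v : V), τ i = Step.vert v → σ i = false →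
      v ∈ applySteps σ τ (Ss ∩ X) i.val) ∧
  (∀ (i : Fin ℓ) (v : V), τ i = Step.vert v → σ i = true →
      v ∉ applySteps σ τ (Ss ∩ X) i.val) ∧
  applySteps σ τ (Ss ∩ X) ℓ = St ∩ X ∧
  (∀ i ≤ ℓ, ∀ ⦃u v : V⦄, G.Adj u v → u ∈ X → v ∈ X →
      u ∈ applySteps σ τ (Ss ∩ X) i ∨ v ∈ applySteps σ τ (Ss ∩ X) i)

lemma applySteps_succ_vert {V : Type} [DecidableEq V] {ℓ : ℕ} (σ : Fin ℓ → Bool)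
    (τ : Fin ℓ → Step V) (S : Finset V) {n : ℕ} (h : n < ℓ) {v : V}
    (hc : τ ⟨n, h⟩ = Step.vert v) :
    applySteps σ τ S (n+1) =
      if σ ⟨n, h⟩ then insert v (applySteps σ τ S n)
      else (applySteps σ τ S n).erase v := by
  simp [applySteps, h, hc]

lemma applySteps_succ_neutral {V : Type} [DecidableEq V] {ℓ : ℕ} (σ : Fin ℓ → Bool)
    (τ : Fin ℓ → Step V) (S : Finset V) {n : ℕ} (h : n < ℓ)
    (hc : ∀ v : V, τ ⟨n, h⟩ ≠ Step.vert v) :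
    applySteps σ τ S (n+1) = applySteps σ τ S n := by
  cases hd : τ ⟨n, h⟩ with
  | vert v => exact absurd hd (hc v)
  | used => simp [applySteps, h, hd]
  | unused => simp [applySteps, h, hd]

lemma applySteps_succ_ge {V : Type} [DecidableEq V] {ℓ : ℕ} (σ : Fin ℓ → Bool)
    (τ : Fin ℓ → Step V) (S : Finset V) {n : ℕ} (h : ¬ n < ℓ) :
    applySteps σ τ S (n+1) = applySteps σ τ S n := by
  simp [applySteps, h]

lemma applySteps_subset {V : Type} [DecidableEq V] {ℓ : ℕ} (σ : Fin ℓ → Bool)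
    (τ : Fin ℓ → Step V) (S X : Finset V) (hS : S ⊆ X) (hτ : IsSigOver X τ) :
    ∀ n, applySteps σ τ S n ⊆ X := by
  intro n
  induction n with
  | zero => exact hS
  | succ n ih =>
    by_cases h : n < ℓ
    · cases hc : τ ⟨n, h⟩ with
      | vert v =>
        rw [applySteps_succ_vert σ τ S h hc]
        split
        · exact Finset.insert_subset (hτ _ _ hc) ih
        · exact (Finset.erase_subset _ _).trans ih
      | used => rw [applySteps_succ_neutral σ τ S h (by simp [hc])]; exact ih
      | unused => rw [applySteps_succ_neutral σ τ S h (by simp [hc])]; exact ih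
    · rw [applySteps_succ_ge σ τ S h]; exact ih

set_option maxHeartbeats 1000000 in
lemma applySteps_union {V : Type} [DecidableEq V] {ℓ : ℕ} (σ : Fin ℓ → Bool)
    (Ss X X₁ X₂ : Finset V) (hX : X = X₁ ∪ X₂)
    (τ τ₁ τ₂ : Fin ℓ → Step V)
    (hτ : IsSigOver X τ) (hτ₁ : IsSigOver X₁ τ₁) (hτ₂ : IsSigOver X₂ τ₂)
    (h1 : ∀ (i : Fin ℓ) (v : V), v ∈ X₁ →
      (τ i = Step.vert v ∨ τ₁ i = Step.vert v) → τ i = τ₁ i)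
    (h2 : ∀ (i : Fin ℓ) (v : V), v ∈ X₂ →
      (τ i = Step.vert v ∨ τ₂ i = Step.vert v) → τ i = τ₂ i) :
    ∀ n, applySteps σ τ (Ss ∩ X) n =
      applySteps σ τ₁ (Ss ∩ X₁) n ∪ applySteps σ τ₂ (Ss ∩ X₂) n := by
  have hA : ∀ n, applySteps σ τ₁ (Ss ∩ X₁) n ⊆ X₁ :=
    applySteps_subset σ τ₁ _ X₁ Finset.inter_subset_right hτ₁
  have hB : ∀ n, applySteps σ τ₂ (Ss ∩ X₂) n ⊆ X₂ :=
    applySteps_subset σ τ₂ _ X₂ Finset.inter_subset_right hτ₂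
  intro n
  induction n with
  | zero => simp [applySteps, hX, Finset.inter_union_distrib_left]
  | succ n ih =>
    by_cases h : n < ℓ
    · -- non-vertex facts
      have key1 : ∀ v : V, τ₁ ⟨n, h⟩ = Step.vert v → τ ⟨n, h⟩ = Step.vert v := by
        intro v hc
        rw [h1 ⟨n, h⟩ v (hτ₁ _ _ hc) (Or.inr hc)]; exact hc
      have key2 : ∀ v : V, τ₂ ⟨n, h⟩ = Step.vert v → τ ⟨n, h⟩ = Step.vert v := by
        intro v hc
        rw [h2 ⟨n, h⟩ v (hτ₂ _ _ hc) (Or.inr hc)]; exact hc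
      cases hc : τ ⟨n, h⟩ with
      | vert v =>
        have hvX := hτ _ _ hc
        rw [hX, Finset.mem_union] at hvX
        rw [applySteps_succ_vert σ τ _ h hc]
        have step1 : v ∈ X₁ → τ₁ ⟨n, h⟩ = Step.vert v := fun hv =>
          (h1 ⟨n, h⟩ v hv (Or.inl hc)).symm.trans hc
        have step2 : v ∈ X₂ → τ₂ ⟨n, h⟩ = Step.vert v := fun hv =>
          (h2 ⟨n, h⟩ v hv (Or.inl hc)).symm.trans hc
        have neu1 : v ∉ X₁ → applySteps σ τ₁ (Ss ∩ X₁) (n+1) = applySteps σ τ₁ (Ss ∩ X₁) n := by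
          intro hv
          refine applySteps_succ_neutral σ τ₁ _ h fun w hw => hv ?_
          have := key1 w hw
          rw [hc] at this; cases this; exact hτ₁ _ _ hw
        have neu2 : v ∉ X₂ → applySteps σ τ₂ (Ss ∩ X₂) (n+1) = applySteps σ τ₂ (Ss ∩ X₂) n := by
          intro hv
          refine applySteps_succ_neutral σ τ₂ _ h fun w hw => hv ?_
          have := key2 w hw
          rw [hc] at this; cases this; exact hτ₂ _ _ hw
        by_cases hv1 : v ∈ X₁ <;> by_cases hv2 : v ∈ X₂
        · rw [applySteps_succ_vert σ τ₁ _ h (step1 hv1),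
            applySteps_succ_vert σ τ₂ _ h (step2 hv2)]
          split <;>
            · ext x
              simp only [Finset.mem_union, Finset.mem_insert, Finset.mem_erase, ih]
              tauto
        · rw [applySteps_succ_vert σ τ₁ _ h (step1 hv1), neu2 hv2]
          have hxv : ∀ x, x ∈ applySteps σ τ₂ (Ss ∩ X₂) n → x ≠ v :=
            fun x hx e => hv2 (e ▸ hB n hx)
          split <;>
            · ext x
              have := hxv x
              simp only [Finset.mem_union, Finset.mem_insert, Finset.mem_erase, ih]
              tauto
        · rw [applySteps_succ_vert σ τ₂ _ h (step2 hv2), neu1 hv1]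
          have hxv : ∀ x, x ∈ applySteps σ τ₁ (Ss ∩ X₁) n → x ≠ v :=
            fun x hx e => hv1 (e ▸ hA n hx)
          split <;>
            · ext x
              have := hxv x
              simp only [Finset.mem_union, Finset.mem_insert, Finset.mem_erase, ih]
              tauto
        · exact absurd hvX (by tauto)
      | used =>
        rw [applySteps_succ_neutral σ τ _ h (by simp [hc]),
          applySteps_succ_neutral σ τ₁ _ h (fun w hw => by simp [key1 w hw] at hc),
          applySteps_succ_neutral σ τ₂ _ h (fun w hw => by simp [key2 w hw] at hc)]
        exact ih
      | unused =>
        rw [applySteps_succ_neutral σ τ _ h (by simp [hc]),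
          applySteps_succ_neutral σ τ₁ _ h (fun w hw => by simp [key1 w hw] at hc),
          applySteps_succ_neutral σ τ₂ _ h (fun w hw => by simp [key2 w hw] at hc)]
        exact ih
    · rw [applySteps_succ_ge σ τ _ h, applySteps_succ_ge σ τ₁ _ h,
        applySteps_succ_ge σ τ₂ _ h]
      exact ih

/-- If `X = X₁ ∪ X₂`, every edge of `G[X]` is contained in `G[X₁]` or `G[X₂]`,
the signature `τ` over `X` agrees with `τ₁` over `X₁` on all steps touching
`X₁` and with `τ₂` over `X₂` on all steps touching `X₂`, and `τ₁, τ₂` are valid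
(for `Π` = edgeless), then `τ` is valid. -/
theorem stmt14 {V : Type} [Fintype V] [DecidableEq V] (G : SimpleGraph V)
    (Ss St : Finset V) (ℓ : ℕ) (hℓ : 1 ≤ ℓ) (σ : Fin ℓ → Bool)
    (X X₁ X₂ : Finset V) (hX : X = X₁ ∪ X₂)
    (hedge : ∀ ⦃u v⦄, G.Adj u v → u ∈ X → v ∈ X →
      (u ∈ X₁ ∧ v ∈ X₁) ∨ (u ∈ X₂ ∧ v ∈ X₂))
    (τ τ₁ τ₂ : Fin ℓ → Step V)
    (hτ : IsSigOver X τ) (hτ₁ : IsSigOver X₁ τ₁) (hτ₂ : IsSigOver X₂ τ₂)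
    (h1 : ∀ (i : Fin ℓ) (v : V), v ∈ X₁ →
      (τ i = Step.vert v ∨ τ₁ i = Step.vert v) → τ i = τ₁ i)
    (h2 : ∀ (i : Fin ℓ) (v : V), v ∈ X₂ →
      (τ i = Step.vert v ∨ τ₂ i = Step.vert v) → τ i = τ₂ i)
    (hv1 : ValidVC G Ss St σ X₁ τ₁) (hv2 : ValidVC G Ss St σ X₂ τ₂) :
    ValidVC G Ss St σ X τ := by
  obtain ⟨hv1a, hv1b, hv1c, hv1d⟩ := hv1
  obtain ⟨hv2a, hv2b, hv2c, hv2d⟩ := hv2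
  have hu := applySteps_union σ Ss X X₁ X₂ hX τ τ₁ τ₂ hτ hτ₁ hτ₂ h1 h2
  have hA : ∀ n, applySteps σ τ₁ (Ss ∩ X₁) n ⊆ X₁ :=
    applySteps_subset σ τ₁ _ X₁ Finset.inter_subset_right hτ₁
  have hB : ∀ n, applySteps σ τ₂ (Ss ∩ X₂) n ⊆ X₂ :=
    applySteps_subset σ τ₂ _ X₂ Finset.inter_subset_right hτ₂
  refine ⟨?_, ?_, ?_, ?_⟩
  · intro i v hc hσ
    have hvX := hτ _ _ hc
    rw [hX, Finset.mem_union] at hvX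
    rw [hu, Finset.mem_union]
    rcases hvX with hv | hv
    · exact Or.inl (hv1a i v ((h1 i v hv (Or.inl hc)).symm.trans hc) hσ)
    · exact Or.inr (hv2a i v ((h2 i v hv (Or.inl hc)).symm.trans hc) hσ)
  · intro i v hc hσ
    rw [hu, Finset.mem_union]
    rintro (hm | hm)
    · exact hv1b i v ((h1 i v (hA _ hm) (Or.inl hc)).symm.trans hc) hσ hm
    · exact hv2b i v ((h2 i v (hB _ hm) (Or.inl hc)).symm.trans hc) hσ hm
  · rw [hu, hv1c, hv2c, hX, Finset.inter_union_distrib_left]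
  · intro i hi u v hadj hu' hv'
    rw [hu, Finset.mem_union, Finset.mem_union]
    rcases hedge hadj hu' hv' with ⟨hu1, hv1⟩ | ⟨hu2, hv2⟩
    · rcases hv1d i hi hadj hu1 hv1 with h | h
      · exact Or.inl (Or.inl h)
      · exact Or.inr (Or.inl h)
    · rcases hv2d i hi hadj hu2 hv2 with h | h
      · exact Or.inl (Or.inr h)
      · exact Or.inr (Or.inr h)
end
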